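/- Fix a, b, c, τ > 0. Define P4(λ) = λ^4 - (c^2 + (a+b)/τ)λ^2 + a c^2/τ and P3(λ) = τ^{-1}·λ·(λ^2 - c^2). Then the roots of P3 are -c, 0, c; the roots of P4 are ±√((A ± √(A^2 - 4ac^2/τ))/2) where A = c^2 + (a+b)/τ; and P3 and P4 strictly interlace if and only if b > 0. -/

import Mathlib

/-!
The cubic `τ⁻¹ λ (λ² - c²)` factors directly. The quartic `P4` is biquadratic: with
`r₊² , r₋²` the two roots of `x² - A x + a c²/τ` (real since its discriminant is
`(c² - (a+b)/τ)² + 4 b c²/τ ≥ 0`), `P4(λ) = (λ² - r₊²)(λ² - r₋²)`. As `P4` is even and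
`r₋ > 0`, interlacing reduces to `r₋ < c < r₊`, i.e. to `P4(c) < 0`; and `P4(c) = -b c²/τ`.
-/

namespace Biquadratic

-- The nonnegative roots `innerRoot ≤ outerRoot` of `x ^ 4 - A * x ^ 2 + B` when `0 ≤ A`, `0 ≤ B`, `4 * B ≤ A ^ 2`.
noncomputable def outerRoot (A B : ℝ) : ℝ := √((A + √(A ^ 2 - 4 * B)) / 2)

noncomputable def innerRoot (A B : ℝ) : ℝ := √((A - √(A ^ 2 - 4 * B)) / 2)

variable {A B : ℝ}

theorem sqrt_discr_le (hA : 0 ≤ A) (hB : 0 ≤ B) : √(A ^ 2 - 4 * B) ≤ A :=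
  Real.sqrt_le_iff.mpr ⟨hA, by linarith⟩

theorem sqrt_discr_lt (hA : 0 < A) (hB : 0 < B) : √(A ^ 2 - 4 * B) < A :=
  (Real.sqrt_lt' hA).mpr (by linarith)

theorem sq_outerRoot (hA : 0 ≤ A) : outerRoot A B ^ 2 = (A + √(A ^ 2 - 4 * B)) / 2 :=
  Real.sq_sqrt (by positivity)

theorem sq_innerRoot (hA : 0 ≤ A) (hB : 0 ≤ B) :
    innerRoot A B ^ 2 = (A - √(A ^ 2 - 4 * B)) / 2 :=
  Real.sq_sqrt (by linarith [sqrt_discr_le hA hB])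

theorem innerRoot_pos (hA : 0 < A) (hB : 0 < B) : 0 < innerRoot A B :=
  Real.sqrt_pos.mpr (by linarith [sqrt_discr_lt hA hB])

theorem innerRoot_le_outerRoot : innerRoot A B ≤ outerRoot A B :=
  Real.sqrt_le_sqrt (by linarith [Real.sqrt_nonneg (A ^ 2 - 4 * B)])

theorem eq_sub_sq_mul_sub_sq (hA : 0 ≤ A) (hB : 0 ≤ B) (hD : 4 * B ≤ A ^ 2) (x : ℝ) :
    x ^ 4 - A * x ^ 2 + B = (x ^ 2 - outerRoot A B ^ 2) * (x ^ 2 - innerRoot A B ^ 2) := by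
  have hs : √(A ^ 2 - 4 * B) ^ 2 = A ^ 2 - 4 * B := Real.sq_sqrt (by linarith)
  rw [sq_outerRoot hA, sq_innerRoot hA hB]
  linear_combination (1 / 4 : ℝ) * hs

theorem eq_zero_iff (hA : 0 ≤ A) (hB : 0 ≤ B) (hD : 4 * B ≤ A ^ 2) (x : ℝ) :
    x ^ 4 - A * x ^ 2 + B = 0 ↔
      x = -outerRoot A B ∨ x = -innerRoot A B ∨ x = innerRoot A B ∨ x = outerRoot A B := by
  rw [eq_sub_sq_mul_sub_sq hA hB hD, mul_eq_zero, sub_eq_zero, sub_eq_zero, sq_eq_sq_iff_eq_or_eq_neg,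
    sq_eq_sq_iff_eq_or_eq_neg]
  tauto

theorem lt_zero_iff {c : ℝ} (hA : 0 ≤ A) (hB : 0 ≤ B) (hD : 4 * B ≤ A ^ 2) (hc : 0 ≤ c) :
    c ^ 4 - A * c ^ 2 + B < 0 ↔ innerRoot A B < c ∧ c < outerRoot A B := by
  have hin : 0 ≤ innerRoot A B := Real.sqrt_nonneg _
  have hout : 0 ≤ outerRoot A B := Real.sqrt_nonneg _
  have hsq : innerRoot A B ^ 2 ≤ outerRoot A B ^ 2 :=
    pow_le_pow_left₀ hin innerRoot_le_outerRoot 2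
  rw [eq_sub_sq_mul_sub_sq hA hB hD, mul_comm, ← sq_lt_sq₀ hin hc, ← sq_lt_sq₀ hc hout]
  constructor
  · intro h
    rcases mul_neg_iff.mp h with ⟨h₁, h₂⟩ | ⟨h₁, h₂⟩
    · exact ⟨by linarith, by linarith⟩
    · exact absurd hsq (by linarith)
  · rintro ⟨h₁, h₂⟩
    exact mul_neg_of_pos_of_neg (by linarith) (by linarith)

end Biquadratic

theorem mul_mul_sq_sub_sq_eq_zero_iff {k c : ℝ} (hk : k ≠ 0) (x : ℝ) :
    k * x * (x ^ 2 - c ^ 2) = 0 ↔ x = -c ∨ x = 0 ∨ x = c := by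
  rw [mul_eq_zero, mul_eq_zero, sub_eq_zero, sq_eq_sq_iff_eq_or_eq_neg]
  simp only [hk, false_or]
  tauto

open Biquadratic in
/-- Symbol of the hyperbolic Blackstock–Crighton-type equation at unit frequency:
roots of `P3(λ) = τ⁻¹λ(λ² - c²)` are `-c, 0, c`; roots of
`P4(λ) = λ⁴ - Aλ² + ac²/τ`, `A = c² + (a+b)/τ`, are
`±√((A ± √(A² - 4ac²/τ))/2)`; and `P3, P4` strictly interlace iff `b > 0`. -/
theorem stmt6 (a c τ b : ℝ) (ha : 0 < a) (hc : 0 < c) (hτ : 0 < τ) (hb : 0 ≤ b) :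
    let A := c ^ 2 + (a + b) / τ
    let rp := Real.sqrt ((A + Real.sqrt (A ^ 2 - 4 * a * c ^ 2 / τ)) / 2)
    let rm := Real.sqrt ((A - Real.sqrt (A ^ 2 - 4 * a * c ^ 2 / τ)) / 2)
    (∀ l : ℝ, τ⁻¹ * l * (l ^ 2 - c ^ 2) = 0 ↔ l = -c ∨ l = 0 ∨ l = c) ∧
    (∀ l : ℝ, l ^ 4 - A * l ^ 2 + a * c ^ 2 / τ = 0 ↔
      l = -rp ∨ l = -rm ∨ l = rm ∨ l = rp) ∧
    ((-rp < -c ∧ -c < -rm ∧ -rm < 0 ∧ 0 < rm ∧ rm < c ∧ c < rp) ↔ 0 < b) := by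
  rw [show 4 * a * c ^ 2 / τ = 4 * (a * c ^ 2 / τ) by ring]
  intro A rp rm
  have hA : 0 < A := by positivity
  have hB : 0 < a * c ^ 2 / τ := by positivity
  have hD : 4 * (a * c ^ 2 / τ) ≤ A ^ 2 := by
    have : A ^ 2 - 4 * (a * c ^ 2 / τ) = (c ^ 2 - (a + b) / τ) ^ 2 + 4 * b * c ^ 2 / τ := by
      simp only [A]; field_simp; ring
    nlinarith [show 0 ≤ 4 * b * c ^ 2 / τ by positivity]
  have hP4c : c ^ 4 - A * c ^ 2 + a * c ^ 2 / τ = -(b * c ^ 2 / τ) := by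
    simp only [A]; field_simp; ring
  have hrm : 0 < rm := innerRoot_pos hA hB
  refine ⟨mul_mul_sq_sub_sq_eq_zero_iff (inv_ne_zero hτ.ne'),
    eq_zero_iff hA.le hB.le hD, ?_⟩
  calc (-rp < -c ∧ -c < -rm ∧ -rm < 0 ∧ 0 < rm ∧ rm < c ∧ c < rp)
      ↔ rm < c ∧ c < rp := by
        constructor
        · exact fun h ↦ h.2.2.2.2
        · rintro ⟨h₁, h₂⟩
          exact ⟨by linarith, by linarith, by linarith, hrm, h₁, h₂⟩
    _ ↔ c ^ 4 - A * c ^ 2 + a * c ^ 2 / τ < 0 := (lt_zero_iff hA.le hB.le hD hc.le).symm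
    _ ↔ 0 < b := by
        rw [hP4c, neg_lt_zero, div_pos_iff_of_pos_right hτ, mul_pos_iff_of_pos_right (by positivity)]
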